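/- arXiv:1403.5873 — 3 statements merged into one kernel-verified Lean document; each statement's English description precedes it below -/
import Mathlib

section
/- A regular category C is a Mal'tsev category if and only if the composition of effective equivalence relations in C is commutative, i.e. Eq(f) Eq(g) = Eq(g) Eq(f) for every pair of regular epimorphisms f and g of C with the same domain. -/
/-!
Everything is argued with generalised elements `x, y : W ⟶ X`. In a regular category a
relation descends along regular epimorphisms, and `x (σρ) z` holds exactly when, after a
regular-epi cover of `W`, there is a `y` with `x ρ y σ z`.

If `𝒞` is Mal'tsev, the reflexive relation `Eq(f) Eq(g)` is symmetric, and its opposite is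
`Eq(g)° Eq(f)° = Eq(g) Eq(f)`. Conversely, let `ρ` be reflexive with projections `p₁, p₂`; these
are split, hence regular, epimorphisms, and `Eq(p₁) Eq(p₂) ≤ Eq(p₂) Eq(p₁)` says that `ρ` is
difunctional (`ρ ρ° ρ ≤ ρ`). A reflexive difunctional relation is an equivalence relation.
-/

open CategoryTheory CategoryTheory.Limits

universe v u

namespace Paper

variable {𝒞 : Type u} [Category.{v} 𝒞]

/-- `f` is a regular epimorphism: it is a coequaliser of some pair of morphisms. -/
def IsRegEpi {X Y : 𝒞} (f : X ⟶ Y) : Prop :=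
  ∃ (Z : 𝒞) (a b : Z ⟶ X), a ≫ f = b ≫ f ∧
    ∀ {T : 𝒞} (h : X ⟶ T), a ≫ h = b ≫ h → ∃! u : Y ⟶ T, f ≫ u = h

/-- Regular epimorphisms are pullback-stable. -/
def RegEpisStable (𝒞 : Type u) [Category.{v} 𝒞] : Prop :=
  ∀ {P X Y Z : 𝒞} (p₁ : P ⟶ X) (p₂ : P ⟶ Y) (f : X ⟶ Z) (g : Y ⟶ Z),
    IsPullback p₁ p₂ f g → IsRegEpi g → IsRegEpi p₁

/-- Every kernel pair admits a coequaliser. -/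
def KernelPairsHaveCoequalisers (𝒞 : Type u) [Category.{v} 𝒞] : Prop :=
  ∀ {R X Y : 𝒞} (f : X ⟶ Y) (a b : R ⟶ X), IsKernelPair f a b →
    ∃ (Q : 𝒞) (q : X ⟶ Q), a ≫ q = b ≫ q ∧
      ∀ {T : 𝒞} (h : X ⟶ T), a ≫ h = b ≫ h → ∃! u : Q ⟶ T, q ≫ u = h

/-- A relation from `X` to `Y`: a jointly monomorphic span. -/
structure Rel (𝒞 : Type u) [Category.{v} 𝒞] (X Y : 𝒞) where
  R : 𝒞
  p1 : R ⟶ X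
  p2 : R ⟶ Y
  jm : ∀ {Z : 𝒞} (a b : Z ⟶ R), a ≫ p1 = b ≫ p1 → a ≫ p2 = b ≫ p2 → a = b

variable {X Y Z : 𝒞}

/-- `ρ` is a subrelation of `σ`. -/
def Rel.le (ρ σ : Rel 𝒞 X Y) : Prop :=
  ∃ j : ρ.R ⟶ σ.R, j ≫ σ.p1 = ρ.p1 ∧ j ≫ σ.p2 = ρ.p2

/-- `ρ` and `σ` are the same relation (isomorphic as subobjects of `X × Y`). -/
def Rel.equiv (ρ σ : Rel 𝒞 X Y) : Prop := ρ.le σ ∧ σ.le ρ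

/-- The opposite relation. -/
def Rel.op (ρ : Rel 𝒞 X Y) : Rel 𝒞 Y X :=
  ⟨ρ.R, ρ.p2, ρ.p1, fun a b h2 h1 => ρ.jm a b h1 h2⟩

/-- A morphism viewed as a relation. -/
def homRel (f : X ⟶ Y) : Rel 𝒞 X Y :=
  ⟨X, 𝟙 X, f, fun a b h _ => by simpa using h⟩

/-- The discrete (diagonal) relation on `X`. -/
def diagRel (X : 𝒞) : Rel 𝒞 X X := homRel (𝟙 X)

/-- The kernel pair `Eq(f)` of `f` as a relation on `X`. -/
noncomputable def kerPairRel [HasPullbacks 𝒞] (f : X ⟶ Y) : Rel 𝒞 X X :=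
  ⟨pullback f f, pullback.fst f f, pullback.snd f f,
    fun a b h1 h2 => pullback.hom_ext h1 h2⟩

/-- `τ` is the composite `σρ` (first `ρ` from `X` to `Y`, then `σ` from `Y` to `Z`),
i.e. the (regular epi, jointly mono) factorisation of the span induced on the
pullback of `ρ.p2` and `σ.p1`. -/
def IsRelComp [HasPullbacks 𝒞] (σ : Rel 𝒞 Y Z) (ρ : Rel 𝒞 X Y) (τ : Rel 𝒞 X Z) : Prop :=
  ∃ e : pullback ρ.p2 σ.p1 ⟶ τ.R, IsRegEpi e ∧
    e ≫ τ.p1 = pullback.fst ρ.p2 σ.p1 ≫ ρ.p1 ∧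
    e ≫ τ.p2 = pullback.snd ρ.p2 σ.p1 ≫ σ.p2

def Rel.IsReflexive (ρ : Rel 𝒞 X X) : Prop :=
  ∃ r : X ⟶ ρ.R, r ≫ ρ.p1 = 𝟙 X ∧ r ≫ ρ.p2 = 𝟙 X

def Rel.IsSymmetric (ρ : Rel 𝒞 X X) : Prop :=
  ∃ s : ρ.R ⟶ ρ.R, s ≫ ρ.p1 = ρ.p2 ∧ s ≫ ρ.p2 = ρ.p1

def Rel.IsTransitive [HasPullbacks 𝒞] (ρ : Rel 𝒞 X X) : Prop :=
  ∃ t : pullback ρ.p2 ρ.p1 ⟶ ρ.R,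
    t ≫ ρ.p1 = pullback.fst ρ.p2 ρ.p1 ≫ ρ.p1 ∧
    t ≫ ρ.p2 = pullback.snd ρ.p2 ρ.p1 ≫ ρ.p2

def Rel.IsEquivalence [HasPullbacks 𝒞] (ρ : Rel 𝒞 X X) : Prop :=
  ρ.IsReflexive ∧ ρ.IsSymmetric ∧ ρ.IsTransitive

/-- A finitely complete category is a Mal'tsev category when every reflexive
relation in it is an equivalence relation. -/
def IsMaltsev (𝒞 : Type u) [Category.{v} 𝒞] [HasPullbacks 𝒞] : Prop :=
  ∀ {X : 𝒞} (ρ : Rel 𝒞 X X), ρ.IsReflexive → ρ.IsEquivalence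

/-- A square of type (1): split epimorphisms `f` (with section `s`) and `g`
(with section `t`), regular epimorphisms `c` and `d`, with `f·c = d·g` and
`s·d = c·t`. -/
structure IsSquare1 {A B E D : 𝒞} (f : A ⟶ B) (s : B ⟶ A) (g : E ⟶ D) (t : D ⟶ E)
    (c : E ⟶ A) (d : D ⟶ B) : Prop where
  sec_f : s ≫ f = 𝟙 B
  sec_g : t ≫ g = 𝟙 D
  regepi_c : IsRegEpi c
  regepi_d : IsRegEpi d
  comm1 : c ≫ f = g ≫ d
  comm2 : d ≫ s = t ≫ c

/-- `N` is an ideal of morphisms. -/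
def IsIdeal (N : MorphismProperty 𝒞) : Prop :=
  ∀ {X Y Z : 𝒞} (f : X ⟶ Y) (g : Y ⟶ Z), N f ∨ N g → N (f ≫ g)

/-- `n` is an `N`-kernel of `f`. -/
def IsNKernel (N : MorphismProperty 𝒞) {X Y K : 𝒞} (f : X ⟶ Y) (n : K ⟶ X) : Prop :=
  N (n ≫ f) ∧ ∀ {Z : 𝒞} (m : Z ⟶ X), N (m ≫ f) → ∃! u : Z ⟶ K, u ≫ n = m

/-- Every morphism admits an `N`-kernel. -/
def HasNKernels (N : MorphismProperty 𝒞) : Prop :=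
  ∀ {X Y : 𝒞} (f : X ⟶ Y), ∃ (K : 𝒞) (n : K ⟶ X), IsNKernel N f n

/-- `τ` is the largest star subrelation `ρ*` of the relation `ρ`. -/
def IsLargestStarSub (N : MorphismProperty 𝒞) (ρ τ : Rel 𝒞 X Y) : Prop :=
  τ.le ρ ∧ N τ.p1 ∧ ∀ σ : Rel 𝒞 X Y, σ.le ρ → N σ.p1 → σ.le τ

/-- `(s1, s2)` is the star-kernel of `f`: the universal star coequalised by `f`. -/
def IsStarKernel (N : MorphismProperty 𝒞) {S X Y : 𝒞} (f : X ⟶ Y) (s1 s2 : S ⟶ X) : Prop :=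
  N s1 ∧ s1 ≫ f = s2 ≫ f ∧
    ∀ {T : 𝒞} (t1 t2 : T ⟶ X), N t1 → t1 ≫ f = t2 ≫ f →
      ∃! u : T ⟶ S, u ≫ s1 = t1 ∧ u ≫ s2 = t2

/-- `(ν1, ν2)` is the star of the pullback relation of `(g, δ)`: the universal
pair with `ν1 ∈ N` and `δ·ν1 = g·ν2`. -/
def IsStarPullbackRel (N : MorphismProperty 𝒞) {W E D P : 𝒞} (δ : W ⟶ D) (g : E ⟶ D)
    (ν1 : P ⟶ W) (ν2 : P ⟶ E) : Prop :=
  N ν1 ∧ ν1 ≫ δ = ν2 ≫ g ∧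
    ∀ {T : 𝒞} (t1 : T ⟶ W) (t2 : T ⟶ E), N t1 → t1 ≫ δ = t2 ≫ g →
      ∃! u : T ⟶ P, u ≫ ν1 = t1 ∧ u ≫ ν2 = t2

/-- `f` is a coequaliser of `(s1, s2)`. -/
def IsCoeqOf {S X Y : 𝒞} (f : X ⟶ Y) (s1 s2 : S ⟶ X) : Prop :=
  s1 ≫ f = s2 ≫ f ∧ ∀ {T : 𝒞} (h : X ⟶ T), s1 ≫ h = s2 ≫ h → ∃! u : Y ⟶ T, f ≫ u = h

/-- Star-regularity: every regular epimorphism is a coequaliser of a star. -/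
def StarRegular (𝒞 : Type u) [Category.{v} 𝒞] (N : MorphismProperty 𝒞) : Prop :=
  ∀ {X Y : 𝒞} (f : X ⟶ Y), IsRegEpi f →
    ∃ (S : 𝒞) (s1 s2 : S ⟶ X), N s1 ∧ IsCoeqOf f s1 s2

/-- `f` is saturating: the induced morphism between the `N`-kernels of the
identities is a regular epimorphism. -/
def Saturating (N : MorphismProperty 𝒞) {X Y : 𝒞} (f : X ⟶ Y) : Prop :=
  ∀ {KX KY : 𝒞} (nX : KX ⟶ X) (nY : KY ⟶ Y), IsNKernel N (𝟙 X) nX → IsNKernel N (𝟙 Y) nY →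
    ∀ u : KX ⟶ KY, u ≫ nY = nX ≫ f → IsRegEpi u

/-- `X` is an `N`-trivial object. -/
def NTrivial (N : MorphismProperty 𝒞) (X : 𝒞) : Prop := N (𝟙 X)

/-- The multi-pointed category has enough trivial objects: `N` is a closed ideal and
`N`-trivial objects are closed under subobjects and squares. -/
def EnoughTrivialObjects [HasBinaryProducts 𝒞] (N : MorphismProperty 𝒞) : Prop :=
  (∀ {X Y : 𝒞} (f : X ⟶ Y), N f → ∃ (T : 𝒞) (p : X ⟶ T) (q : T ⟶ Y),
      NTrivial N T ∧ p ≫ q = f) ∧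
  (∀ {S X : 𝒞} (m : S ⟶ X), Mono m → NTrivial N X → NTrivial N S) ∧
  (∀ X : 𝒞, NTrivial N X → NTrivial N (X ⨯ X))

/-- A square of type (1) is a star-regular pushout when `(c g°)* = f° d*`. -/
def IsStarRegularPushout [HasPullbacks 𝒞] (N : MorphismProperty 𝒞) {A B E D : 𝒞}
    (f : A ⟶ B) (g : E ⟶ D) (c : E ⟶ A) (d : D ⟶ B) : Prop :=
  ∀ (ρ τ μ : Rel 𝒞 D A) (ds : Rel 𝒞 D B),
    IsRelComp (homRel c) (Rel.op (homRel g)) ρ → IsLargestStarSub N ρ τ →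
    IsLargestStarSub N (homRel d) ds → IsRelComp (Rel.op (homRel f)) ds μ →
    τ.equiv μ

/-- 2-star-permutability: `Eq(f) Eq(g)* = Eq(g) Eq(f)*` for all regular
epimorphisms `f`, `g` with the same domain. -/
def TwoStarPermutable (𝒞 : Type u) [Category.{v} 𝒞] [HasPullbacks 𝒞]
    (N : MorphismProperty 𝒞) : Prop :=
  ∀ {X Y Z : 𝒞} (f : X ⟶ Y) (g : X ⟶ Z), IsRegEpi f → IsRegEpi g →
    ∀ (sf sg : Rel 𝒞 X X), IsLargestStarSub N (kerPairRel f) sf →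
      IsLargestStarSub N (kerPairRel g) sg →
    ∀ (τ₁ τ₂ : Rel 𝒞 X X), IsRelComp (kerPairRel f) sg τ₁ →
      IsRelComp (kerPairRel g) sf τ₂ → τ₁.equiv τ₂

section Pointed

variable [HasZeroMorphisms 𝒞]

/-- `k` is a kernel of `f`. -/
def IsKernelOf {K X Y : 𝒞} (k : K ⟶ X) (f : X ⟶ Y) : Prop :=
  k ≫ f = 0 ∧ ∀ {Z : 𝒞} (m : Z ⟶ X), m ≫ f = 0 → ∃! u : Z ⟶ K, u ≫ k = m

/-- `f` is a cokernel of `k`. -/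
def IsCokernelOf {X Y K : 𝒞} (f : X ⟶ Y) (k : K ⟶ X) : Prop :=
  k ≫ f = 0 ∧ ∀ {T : 𝒞} (h : X ⟶ T), k ≫ h = 0 → ∃! u : Y ⟶ T, f ≫ u = h

/-- Short exact sequence `K → X ↠ Y`. -/
def IsShortExact {K X Y : 𝒞} (k : K ⟶ X) (f : X ⟶ Y) : Prop :=
  IsKernelOf k f ∧ IsCokernelOf f k

/-- Subtractivity: every reflexive, left punctual relation is right punctual. -/
def IsSubtractive (𝒞 : Type u) [Category.{v} 𝒞] [HasZeroMorphisms 𝒞] : Prop :=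
  ∀ {X : 𝒞} (ρ : Rel 𝒞 X X), ρ.IsReflexive →
    (∃ l : X ⟶ ρ.R, l ≫ ρ.p1 = 𝟙 X ∧ l ≫ ρ.p2 = 0) →
    (∃ r : X ⟶ ρ.R, r ≫ ρ.p1 = 0 ∧ r ≫ ρ.p2 = 𝟙 X)

end Pointed

theorem isRegEpi_iff_isRegularEpi {X Y : 𝒞} (f : X ⟶ Y) : IsRegEpi f ↔ IsRegularEpi f := by
  constructor
  · rintro ⟨W, a, b, w, huniv⟩
    exact ⟨⟨⟨W, a, b, w, Cofork.IsColimit.ofExistsUnique fun s => huniv s.π s.condition⟩⟩⟩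
  · rintro ⟨⟨h⟩⟩
    exact ⟨h.W, h.left, h.right, h.w, fun k hk => Cofork.IsColimit.existsUnique h.isColimit k hk⟩

theorem IsRegEpi.epi {X Y : 𝒞} {f : X ⟶ Y} (hf : IsRegEpi f) : Epi f :=
  have := (isRegEpi_iff_isRegularEpi f).1 hf
  inferInstance

theorem isRegEpi_of_comp_eq_id {X Y : 𝒞} {f : X ⟶ Y} {s : Y ⟶ X} (hs : s ≫ f = 𝟙 Y) :
    IsRegEpi f :=
  have : IsSplitEpi f := IsSplitEpi.mk' ⟨s, hs⟩
  (isRegEpi_iff_isRegularEpi f).2 inferInstance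

theorem regular_of_kernelPairsHaveCoequalisers [HasFiniteLimits 𝒞]
    (hcoeq : KernelPairsHaveCoequalisers 𝒞) (hstab : RegEpisStable 𝒞) : Regular 𝒞 where
  hasCoequalizer_of_isKernelPair {_ _ _ f a b} hab := by
    obtain ⟨Q, q, w, huniv⟩ := hcoeq f a b hab
    exact ⟨⟨⟨Cofork.ofπ q w, Cofork.IsColimit.ofExistsUnique fun s => huniv s.π s.condition⟩⟩⟩
  regularEpiIsStableUnderBaseChange := ⟨fun sq hg =>
    (isRegEpi_iff_isRegularEpi _).1 (hstab _ _ _ _ sq.flip ((isRegEpi_iff_isRegularEpi _).2 hg))⟩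

theorem exists_isRelComp [Regular 𝒞] (σ : Rel 𝒞 Y Z) (ρ : Rel 𝒞 X Y) :
    ∃ τ : Rel 𝒞 X Z, IsRelComp σ ρ τ := by
  let F := Regular.strongEpiMonoFactorisation
    (prod.lift (pullback.fst ρ.p2 σ.p1 ≫ ρ.p1) (pullback.snd ρ.p2 σ.p1 ≫ σ.p2))
  refine ⟨⟨F.I, F.m ≫ prod.fst, F.m ≫ prod.snd, fun a b h₁ h₂ => ?_⟩,
    F.e, (isRegEpi_iff_isRegularEpi _).2 inferInstance,
    by rw [F.fac_assoc, prod.lift_fst], by rw [F.fac_assoc, prod.lift_snd]⟩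
  rw [← cancel_mono F.m]
  ext <;> simpa

def Rel.Relates (ρ : Rel 𝒞 X Y) {W : 𝒞} (x : W ⟶ X) (y : W ⟶ Y) : Prop :=
  ∃ t : W ⟶ ρ.R, t ≫ ρ.p1 = x ∧ t ≫ ρ.p2 = y

namespace Rel

section

variable {ρ σ : Rel 𝒞 X Y} {W : 𝒞}

theorem relates_p1_p2 (ρ : Rel 𝒞 X Y) : ρ.Relates ρ.p1 ρ.p2 :=
  ⟨𝟙 _, Category.id_comp _, Category.id_comp _⟩

theorem le.relates (h : ρ.le σ) {x : W ⟶ X} {y : W ⟶ Y} (hxy : ρ.Relates x y) :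
    σ.Relates x y := by
  obtain ⟨j, hj₁, hj₂⟩ := h
  obtain ⟨t, rfl, rfl⟩ := hxy
  exact ⟨t ≫ j, by simp [hj₁], by simp [hj₂]⟩

theorem le_of_relates (h : ∀ {W : 𝒞} (x : W ⟶ X) (y : W ⟶ Y), ρ.Relates x y → σ.Relates x y) :
    ρ.le σ :=
  h _ _ ρ.relates_p1_p2

theorem relates_of_isRegEpi {V : 𝒞} {q : V ⟶ W} (hq : IsRegEpi q) {x : W ⟶ X} {y : W ⟶ Y}
    (h : ρ.Relates (q ≫ x) (q ≫ y)) : ρ.Relates x y := by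
  obtain ⟨t, ht₁, ht₂⟩ := h
  obtain ⟨_, a, b, hab, huniv⟩ := hq
  have : a ≫ t = b ≫ t :=
    ρ.jm _ _ (by simp [ht₁, reassoc_of% hab]) (by simp [ht₂, reassoc_of% hab])
  obtain ⟨u, rfl, -⟩ := huniv t this
  have := IsRegEpi.epi ⟨_, a, b, hab, huniv⟩
  exact ⟨u, (cancel_epi q).1 (by simpa using ht₁), (cancel_epi q).1 (by simpa using ht₂)⟩

end

section Endo

variable {ρ : Rel 𝒞 X X}

theorem isSymmetric_iff :
    ρ.IsSymmetric ↔ ∀ {W : 𝒞} {x y : W ⟶ X}, ρ.Relates x y → ρ.Relates y x := by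
  refine ⟨fun ⟨s, hs₁, hs₂⟩ W x y ⟨t, ht₁, ht₂⟩ => ⟨t ≫ s, ?_, ?_⟩, fun h => h ρ.relates_p1_p2⟩
  · rw [Category.assoc, hs₁, ht₂]
  · rw [Category.assoc, hs₂, ht₁]

theorem IsSymmetric.symm (h : ρ.IsSymmetric) {W : 𝒞} {x y : W ⟶ X} (hxy : ρ.Relates x y) :
    ρ.Relates y x :=
  isSymmetric_iff.1 h hxy

theorem IsReflexive.relates (h : ρ.IsReflexive) {W : 𝒞} (x : W ⟶ X) : ρ.Relates x x := by
  obtain ⟨r, hr₁, hr₂⟩ := h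
  exact ⟨x ≫ r, by rw [Category.assoc, hr₁, Category.comp_id],
    by rw [Category.assoc, hr₂, Category.comp_id]⟩

theorem IsTransitive.of_relates [HasPullbacks 𝒞]
    (h : ∀ {W : 𝒞} {x y z : W ⟶ X}, ρ.Relates x y → ρ.Relates y z → ρ.Relates x z) :
    ρ.IsTransitive :=
  h ⟨pullback.fst _ _, rfl, pullback.condition⟩ ⟨pullback.snd _ _, rfl, rfl⟩

end Endo

end Rel

theorem relates_kerPairRel_iff [HasPullbacks 𝒞] (f : X ⟶ Y) {W : 𝒞} {x y : W ⟶ X} :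
    (kerPairRel f).Relates x y ↔ x ≫ f = y ≫ f := by
  refine ⟨?_, fun h => ⟨pullback.lift x y h, pullback.lift_fst _ _ _, pullback.lift_snd _ _ _⟩⟩
  rintro ⟨t, rfl, rfl⟩
  rw [Category.assoc, Category.assoc]
  exact t ≫= pullback.condition

theorem isReflexive_kerPairRel [HasPullbacks 𝒞] (f : X ⟶ Y) : (kerPairRel f).IsReflexive :=
  (relates_kerPairRel_iff f).2 rfl

theorem isSymmetric_kerPairRel [HasPullbacks 𝒞] (f : X ⟶ Y) : (kerPairRel f).IsSymmetric :=
  Rel.isSymmetric_iff.2 fun h =>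
    (relates_kerPairRel_iff f).2 ((relates_kerPairRel_iff f).1 h).symm

namespace IsRelComp

variable [HasPullbacks 𝒞] {σ : Rel 𝒞 Y Z} {ρ : Rel 𝒞 X Y} {τ : Rel 𝒞 X Z} {W : 𝒞}

theorem relates (h : IsRelComp σ ρ τ) {x : W ⟶ X} {y : W ⟶ Y} {z : W ⟶ Z}
    (hxy : ρ.Relates x y) (hyz : σ.Relates y z) : τ.Relates x z := by
  obtain ⟨e, -, he₁, he₂⟩ := h
  obtain ⟨a, rfl, ha₂⟩ := hxy
  obtain ⟨b, hb₁, rfl⟩ := hyz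
  exact ⟨pullback.lift a b (ha₂.trans hb₁.symm) ≫ e,
    by simp only [Category.assoc, he₁, pullback.lift_fst_assoc],
    by simp only [Category.assoc, he₂, pullback.lift_snd_assoc]⟩

theorem exists_isRegEpi_of_relates (hstab : RegEpisStable 𝒞) (h : IsRelComp σ ρ τ)
    {x : W ⟶ X} {z : W ⟶ Z} (hxz : τ.Relates x z) :
    ∃ (V : 𝒞) (q : V ⟶ W) (y : V ⟶ Y),
      IsRegEpi q ∧ ρ.Relates (q ≫ x) y ∧ σ.Relates y (q ≫ z) := by
  obtain ⟨e, he, he₁, he₂⟩ := h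
  obtain ⟨t, rfl, rfl⟩ := hxz
  refine ⟨_, pullback.fst t e, pullback.snd t e ≫ pullback.fst _ _ ≫ ρ.p2,
    hstab _ _ _ _ (.of_hasPullback t e) he,
    ⟨pullback.snd t e ≫ pullback.fst _ _, ?_, Category.assoc _ _ _⟩,
    ⟨pullback.snd t e ≫ pullback.snd _ _, ?_, ?_⟩⟩
  · simp [← he₁, pullback.condition_assoc]
  · simp [pullback.condition]
  · simp [← he₂, pullback.condition_assoc]

end IsRelComp

namespace IsRelComp

variable [HasPullbacks 𝒞] {σ ρ τ : Rel 𝒞 X X}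

theorem isReflexive (h : IsRelComp σ ρ τ) (hρ : ρ.IsReflexive) (hσ : σ.IsReflexive) :
    τ.IsReflexive :=
  h.relates hρ hσ

theorem le_of_isSymmetric (hstab : RegEpisStable 𝒞) (hρ : ρ.IsSymmetric) (hσ : σ.IsSymmetric)
    (hτ : τ.IsSymmetric) {τ' : Rel 𝒞 X X} (h : IsRelComp σ ρ τ) (h' : IsRelComp ρ σ τ') :
    τ.le τ' :=
  Rel.le_of_relates fun _ _ hxz => by
    obtain ⟨_, q, _, hq, hzy, hyx⟩ := h.exists_isRegEpi_of_relates hstab (hτ.symm hxz)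
    exact Rel.relates_of_isRegEpi hq (h'.relates (hσ.symm hyx) (hρ.symm hzy))

end IsRelComp

/-- Difunctionality `ρ ρ° ρ ≤ ρ`. -/
def Rel.IsDifunctional (ρ : Rel 𝒞 X Y) : Prop :=
  ∀ {W : 𝒞} {x x' : W ⟶ X} {y y' : W ⟶ Y},
    ρ.Relates x y → ρ.Relates x' y → ρ.Relates x' y' → ρ.Relates x y'

theorem Rel.IsReflexive.isEquivalence [HasPullbacks 𝒞] {ρ : Rel 𝒞 X X} (hr : ρ.IsReflexive)
    (hd : ρ.IsDifunctional) : ρ.IsEquivalence :=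
  ⟨hr, isSymmetric_iff.2 fun hxy => hd (hr.relates _) hxy (hr.relates _),
    IsTransitive.of_relates fun hxy hyz => hd hxy (hr.relates _) hyz⟩

theorem Rel.isDifunctional_of_le [HasPullbacks 𝒞] (hstab : RegEpisStable 𝒞) {ρ : Rel 𝒞 X Y}
    {τ₁ τ₂ : Rel 𝒞 ρ.R ρ.R} (h₁ : IsRelComp (kerPairRel ρ.p1) (kerPairRel ρ.p2) τ₁)
    (h₂ : IsRelComp (kerPairRel ρ.p2) (kerPairRel ρ.p1) τ₂) (hle : τ₁.le τ₂) :
    ρ.IsDifunctional := by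
  rintro W - - - - ⟨u, rfl, rfl⟩ ⟨v, rfl, hv⟩ ⟨w, hw, rfl⟩
  -- `u Eq(p₂) v Eq(p₁) w`; the middle element of `u (Eq(p₂) Eq(p₁)) w` witnesses `x ρ y'`.
  have huw : τ₁.Relates u w := h₁.relates ((relates_kerPairRel_iff _).2 hv.symm)
    ((relates_kerPairRel_iff _).2 hw.symm)
  obtain ⟨_, q, b, hq, hub, hbw⟩ := h₂.exists_isRegEpi_of_relates hstab (hle.relates huw)
  refine Rel.relates_of_isRegEpi hq ⟨b, ?_, ?_⟩
  · rw [← Category.assoc, (relates_kerPairRel_iff _).1 hub]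
  · rw [← Category.assoc, (relates_kerPairRel_iff _).1 hbw]

/-- A regular category `𝒞` is a Mal'tsev category if and only if
`Eq(f) Eq(g) = Eq(g) Eq(f)` for every pair of regular epimorphisms `f`, `g` of `𝒞`
with the same domain. -/
theorem statement0 [HasFiniteLimits 𝒞]
    (hcoeq : KernelPairsHaveCoequalisers 𝒞) (hstab : RegEpisStable 𝒞) :
    IsMaltsev 𝒞 ↔
      ∀ {X Y Z : 𝒞} (f : X ⟶ Y) (g : X ⟶ Z), IsRegEpi f → IsRegEpi g →
        ∀ (τ₁ τ₂ : Rel 𝒞 X X),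
          IsRelComp (kerPairRel f) (kerPairRel g) τ₁ →
          IsRelComp (kerPairRel g) (kerPairRel f) τ₂ → τ₁.equiv τ₂ := by
  constructor
  · intro hM X Y Z f g _ _ τ₁ τ₂ h₁ h₂
    have hτ₁ := (hM τ₁ (h₁.isReflexive (isReflexive_kerPairRel g) (isReflexive_kerPairRel f))).2.1
    have hτ₂ := (hM τ₂ (h₂.isReflexive (isReflexive_kerPairRel f) (isReflexive_kerPairRel g))).2.1
    exact ⟨h₁.le_of_isSymmetric hstab (isSymmetric_kerPairRel g) (isSymmetric_kerPairRel f) hτ₁ h₂,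
      h₂.le_of_isSymmetric hstab (isSymmetric_kerPairRel f) (isSymmetric_kerPairRel g) hτ₂ h₁⟩
  · intro H X ρ hρ
    have : Regular 𝒞 := regular_of_kernelPairsHaveCoequalisers hcoeq hstab
    obtain ⟨τ₁, h₁⟩ := exists_isRelComp (kerPairRel ρ.p1) (kerPairRel ρ.p2)
    obtain ⟨τ₂, h₂⟩ := exists_isRelComp (kerPairRel ρ.p2) (kerPairRel ρ.p1)
    have ⟨r, hr₁, hr₂⟩ := hρ
    have hle := (H ρ.p1 ρ.p2 (isRegEpi_of_comp_eq_id hr₁) (isRegEpi_of_comp_eq_id hr₂)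
      τ₁ τ₂ h₁ h₂).1
    exact hρ.isEquivalence (Rel.isDifunctional_of_le hstab h₁ h₂ hle)

end Paper
end

section
/- In a regular multi-pointed category with kernels, given a square of type (1), let ⟨g, c⟩ = m·p be the (regular epimorphism, monomorphism) factorisation of the comparison morphism C → D×_B A to the pullback of d and f, with m: M ↣ D×_B A; put a = x·m and b = y·m where x, y are the pullback projections, and let n_a: N_a → M and n_x: N_x → D×_B A be N-kernels of a and of x. Then the square is a star-regular pushout if and only if the induced morphism N_a → N_x (the one satisfying n_x·(N_a → N_x) = m·n_a) is an isomorphism. -/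
open CategoryTheory CategoryTheory.Limits

universe v u

namespace Paper

variable {𝒞 : Type u} [Category.{v} 𝒞]

variable {X Y Z : 𝒞}

/-!
The relations occurring in `(c g°)*` and `f° d*` can all be computed inside the pullback
`D ×_B A`: `c g°` is the image `m` of `⟨g, c⟩`, so `(c g°)*` is `m` restricted to the
`N`-kernel `n_a` of its first leg; and since the `N`-kernel of any `x : P → D` is the pullback
of the `N`-kernel of `1_D` along `x`, `f° d*` is `D ×_B A` restricted to `n_x`. Two restrictions
of one relation along monomorphisms agree exactly when the monomorphisms are isomorphic, i.e.
when the comparison `N_a → N_x` is invertible.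
-/

section Regular

theorem IsRegEpi.cancel {X Y : 𝒞} {f : X ⟶ Y} (hf : IsRegEpi f) {T : 𝒞}
    {u v : Y ⟶ T} (h : f ≫ u = f ≫ v) : u = v := by
  obtain ⟨Z, a, b, hab, huniv⟩ := hf
  obtain ⟨w, -, hw⟩ := huniv (f ≫ u) (by rw [reassoc_of% hab])
  exact (hw u rfl).trans (hw v h.symm).symm

theorem isRegEpi_of_isIso {X Y : 𝒞} (f : X ⟶ Y) [IsIso f] : IsRegEpi f :=
  ⟨X, 𝟙 X, 𝟙 X, rfl, fun h _ => ⟨inv f ≫ h, by simp, fun v hv => by simp [← hv]⟩⟩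

theorem IsRegEpi.isIso_comp {X Y Z : 𝒞} (i : X ⟶ Y) [IsIso i] {f : Y ⟶ Z}
    (hf : IsRegEpi f) : IsRegEpi (i ≫ f) := by
  obtain ⟨W, a, b, hab, huniv⟩ := hf
  refine ⟨W, a ≫ inv i, b ≫ inv i, by simp [hab], fun h hh => ?_⟩
  obtain ⟨w, hw, huniq⟩ := huniv (inv i ≫ h) (by simpa using hh)
  exact ⟨w, by simp [hw], fun v hv => huniq v (by simp [← hv])⟩

end Regular

namespace Rel

theorem le_refl (ρ : Rel 𝒞 X Y) : ρ.le ρ := ⟨𝟙 _, by simp, by simp⟩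

theorem le_trans {ρ σ τ : Rel 𝒞 X Y} (h₁ : ρ.le σ) (h₂ : σ.le τ) : ρ.le τ := by
  obtain ⟨j, hj₁, hj₂⟩ := h₁
  obtain ⟨k, hk₁, hk₂⟩ := h₂
  exact ⟨j ≫ k, by simp [hk₁, hj₁], by simp [hk₂, hj₂]⟩

theorem equiv_refl (ρ : Rel 𝒞 X Y) : ρ.equiv ρ := ⟨ρ.le_refl, ρ.le_refl⟩

theorem equiv.symm {ρ σ : Rel 𝒞 X Y} (h : ρ.equiv σ) : σ.equiv ρ := ⟨h.2, h.1⟩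

theorem equiv.trans {ρ σ τ : Rel 𝒞 X Y} (h₁ : ρ.equiv σ) (h₂ : σ.equiv τ) : ρ.equiv τ :=
  ⟨le_trans h₁.1 h₂.1, le_trans h₂.2 h₁.2⟩

theorem le_of_isRegEpi {ρ σ : Rel 𝒞 X Y} {W : 𝒞} {e : W ⟶ ρ.R} (he : IsRegEpi e)
    (v : W ⟶ σ.R) (h₁ : e ≫ ρ.p1 = v ≫ σ.p1) (h₂ : e ≫ ρ.p2 = v ≫ σ.p2) : ρ.le σ := by
  obtain ⟨Z, a, b, hab, huniv⟩ := he
  have hv : a ≫ v = b ≫ v := σ.jm _ _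
    (by simp only [Category.assoc, ← h₁, reassoc_of% hab])
    (by simp only [Category.assoc, ← h₂, reassoc_of% hab])
  obtain ⟨j, hj, -⟩ := huniv v hv
  have he : IsRegEpi e := ⟨Z, a, b, hab, huniv⟩
  exact ⟨j, he.cancel (by rw [reassoc_of% hj, h₁]), he.cancel (by rw [reassoc_of% hj, h₂])⟩

/-- The relation `f° d`, realised as `D ×_B A`. -/
noncomputable def ofPullback [HasPullbacks 𝒞] {A B D : 𝒞} (d : D ⟶ B) (f : A ⟶ B) :
    Rel 𝒞 D A :=
  ⟨pullback d f, pullback.fst d f, pullback.snd d f, fun _ _ h₁ h₂ => pullback.hom_ext h₁ h₂⟩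

abbrev restrict (ρ : Rel 𝒞 X Y) {K : 𝒞} (n : K ⟶ ρ.R) (hn : Mono n) : Rel 𝒞 X Y :=
  ⟨K, n ≫ ρ.p1, n ≫ ρ.p2, fun a b h₁ h₂ =>
    (cancel_mono n).1 (ρ.jm _ _ (by simpa using h₁) (by simpa using h₂))⟩

variable (ρ : Rel 𝒞 X Y) {K L : 𝒞}

theorem restrict_le (n : K ⟶ ρ.R) (hn : Mono n) : (ρ.restrict n hn).le ρ :=
  ⟨n, rfl, rfl⟩

theorem restrict_restrict_equiv (a : K ⟶ ρ.R) (ha : Mono a) (b : L ⟶ K) (hb : Mono b) :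
    ((ρ.restrict a ha).restrict b hb).equiv (ρ.restrict (b ≫ a) (mono_comp b a)) :=
  ⟨⟨𝟙 _, by simp [restrict], by simp [restrict]⟩, ⟨𝟙 _, by simp [restrict], by simp [restrict]⟩⟩

theorem restrict_le_restrict_iff (a : K ⟶ ρ.R) (ha : Mono a) (b : L ⟶ ρ.R) (hb : Mono b) :
    (ρ.restrict a ha).le (ρ.restrict b hb) ↔ ∃ j : K ⟶ L, j ≫ b = a := by
  constructor
  · rintro ⟨(j : K ⟶ L), hj₁, hj₂⟩
    exact ⟨j, ρ.jm _ _ (by simpa using hj₁) (by simpa using hj₂)⟩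
  · rintro ⟨j, rfl⟩
    exact ⟨j, by simp [restrict], by simp [restrict]⟩

theorem restrict_equiv_restrict_iff {a : K ⟶ ρ.R} (ha : Mono a) {b : L ⟶ ρ.R} (hb : Mono b)
    (u : K ⟶ L) (hu : u ≫ b = a) : (ρ.restrict a ha).equiv (ρ.restrict b hb) ↔ IsIso u := by
  simp only [Rel.equiv, restrict_le_restrict_iff]
  constructor
  · rintro ⟨-, k, hk⟩
    refine ⟨k, (cancel_mono a).1 ?_, (cancel_mono b).1 ?_⟩
    · simp [hk, hu]
    · simp [hk, hu]
  · intro _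
    exact ⟨⟨u, hu⟩, inv u, by simp [← hu]⟩

end Rel

section Composite

variable [HasPullbacks 𝒞]

theorem IsRelComp.le_of_le {σ : Rel 𝒞 Y Z} {ρ ρ' : Rel 𝒞 X Y} {τ τ' : Rel 𝒞 X Z}
    (h : IsRelComp σ ρ τ) (h' : IsRelComp σ ρ' τ') (hρ : ρ.le ρ') : τ.le τ' := by
  obtain ⟨e, he, he₁, he₂⟩ := h
  obtain ⟨e', -, he₁', he₂'⟩ := h'
  obtain ⟨j, hj₁, hj₂⟩ := hρ
  let v : pullback ρ.p2 σ.p1 ⟶ pullback ρ'.p2 σ.p1 :=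
    pullback.lift (pullback.fst _ _ ≫ j) (pullback.snd _ _) (by simp [hj₂, pullback.condition])
  refine Rel.le_of_isRegEpi he (v ≫ e') ?_ ?_
  · rw [he₁, Category.assoc, he₁', pullback.lift_fst_assoc, Category.assoc, hj₁]
  · rw [he₂, Category.assoc, he₂', pullback.lift_snd_assoc]

theorem IsRelComp.equiv_of_equiv {σ : Rel 𝒞 Y Z} {ρ ρ' : Rel 𝒞 X Y} {τ τ' : Rel 𝒞 X Z}
    (h : IsRelComp σ ρ τ) (h' : IsRelComp σ ρ' τ') (hρ : ρ.equiv ρ') : τ.equiv τ' :=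
  ⟨h.le_of_le h' hρ.1, h'.le_of_le h hρ.2⟩

theorem isRelComp_homRel_op_homRel {E : 𝒞} {g : E ⟶ X} {c : E ⟶ Y} (ρ : Rel 𝒞 X Y)
    {p : E ⟶ ρ.R} (hp : IsRegEpi p) (hg : p ≫ ρ.p1 = g) (hc : p ≫ ρ.p2 = c) :
    IsRelComp (homRel c) (Rel.op (homRel g)) ρ := by
  have hfst : pullback.fst (𝟙 E) (𝟙 E) = pullback.snd (𝟙 E) (𝟙 E) := by
    simpa using pullback.condition (f := 𝟙 E) (g := 𝟙 E)
  refine ⟨pullback.fst (𝟙 E) (𝟙 E) ≫ p, hp.isIso_comp (pullback.fst (𝟙 E) (𝟙 E)), ?_, ?_⟩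
  · simp [Rel.op, homRel, hg]
  · simp [Rel.op, homRel, hc, hfst]

end Composite

section Kernels

variable {N : MorphismProperty 𝒞}

theorem IsLargestStarSub.equiv_of_equiv {ρ ρ' τ τ' : Rel 𝒞 X Y} (h : IsLargestStarSub N ρ τ)
    (h' : IsLargestStarSub N ρ' τ') (hρ : ρ.equiv ρ') : τ.equiv τ' :=
  ⟨h'.2.2 τ (Rel.le_trans h.1 hρ.1) h.2.1, h.2.2 τ' (Rel.le_trans h'.1 hρ.2) h'.2.1⟩

theorem IsNKernel.mono (hN : IsIdeal N) {K : 𝒞} {f : X ⟶ Y} {n : K ⟶ X}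
    (h : IsNKernel N f n) : Mono n :=
  ⟨fun a b hab => by
    obtain ⟨w, -, hw⟩ := h.2 (a ≫ n) (by rw [Category.assoc]; exact hN _ _ (Or.inr h.1))
    exact (hw a rfl).trans (hw b hab.symm).symm⟩

theorem IsNKernel.isPullback (hN : IsIdeal N) {D P K L : 𝒞} {x : P ⟶ D} {n : K ⟶ D}
    {k : L ⟶ P} {q : L ⟶ K} (hn : IsNKernel N (𝟙 D) n) (hk : IsNKernel N x k) (w : q ≫ n = k ≫ x) :
    IsPullback q k n x := by
  have := hn.mono hN
  have := hk.mono hN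
  have hsnd (s : PullbackCone n x) : N (s.snd ≫ x) := by
    rw [← s.condition]
    exact hN _ _ (Or.inr (by simpa using hn.1))
  choose l hl _ using fun s : PullbackCone n x => hk.2 s.snd (hsnd s)
  refine IsPullback.of_isLimit' ⟨w⟩ (PullbackCone.IsLimit.mk w l (fun s => ?_) hl
    (fun s v _ hv => (cancel_mono k).1 (hv.trans (hl s).symm)))
  rw [← cancel_mono n, Category.assoc, w, reassoc_of% hl, s.condition]

theorem isLargestStarSub_restrict (hN : IsIdeal N) (ρ : Rel 𝒞 X Y) {K : 𝒞} {n : K ⟶ ρ.R}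
    (hn : IsNKernel N ρ.p1 n) : IsLargestStarSub N ρ (ρ.restrict n (hn.mono hN)) := by
  refine ⟨ρ.restrict_le n _, hn.1, fun σ ⟨j, hj₁, hj₂⟩ hσ => ?_⟩
  obtain ⟨w, hw, -⟩ := hn.2 j (hj₁ ▸ hσ)
  exact ⟨w, by simp [reassoc_of% hw, hj₁], by simp [reassoc_of% hw, hj₂]⟩

theorem isRelComp_op_homRel_restrict [HasPullbacks 𝒞] (hN : IsIdeal N) {A B D K Nx : 𝒞}
    (f : A ⟶ B) (d : D ⟶ B) {n : K ⟶ D} (hn : IsNKernel N (𝟙 D) n) {nx : Nx ⟶ pullback d f}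
    (hnx : IsNKernel N (pullback.fst d f) nx) :
    IsRelComp (Rel.op (homRel f)) ((homRel d).restrict n (hn.mono hN))
      ((Rel.ofPullback d f).restrict nx (hnx.mono hN)) := by
  obtain ⟨q, hq, -⟩ := hn.2 (nx ≫ pullback.fst d f) (by simpa using hnx.1)
  have hpb : IsPullback q (nx ≫ pullback.snd d f) (n ≫ d) f :=
    (IsNKernel.isPullback hN hn hnx hq).paste_vert (IsPullback.of_hasPullback d f)
  refine ⟨hpb.isoPullback.inv, isRegEpi_of_isIso hpb.isoPullback.inv, ?_, ?_⟩
  · change _ ≫ nx ≫ pullback.fst d f = pullback.fst (n ≫ d) f ≫ n ≫ 𝟙 D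
    rw [← hq, hpb.isoPullback_inv_fst_assoc, Category.comp_id]
  · simp [Rel.restrict, Rel.ofPullback, Rel.op, homRel]

end Kernels

theorem isStarRegularPushout_iff [HasPullbacks 𝒞] {N : MorphismProperty 𝒞} {A B E D : 𝒞}
    {f : A ⟶ B} {g : E ⟶ D} {c : E ⟶ A} {d : D ⟶ B} {ρ τ μ : Rel 𝒞 D A} {ds : Rel 𝒞 D B}
    (hρ : IsRelComp (homRel c) (Rel.op (homRel g)) ρ) (hτ : IsLargestStarSub N ρ τ)
    (hds : IsLargestStarSub N (homRel d) ds) (hμ : IsRelComp (Rel.op (homRel f)) ds μ) :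
    IsStarRegularPushout N f g c d ↔ τ.equiv μ := by
  refine ⟨fun h => h ρ τ μ ds hρ hτ hds hμ, fun h ρ' τ' μ' ds' hρ' hτ' hds' hμ' => ?_⟩
  have hτ'' : τ'.equiv τ := hτ'.equiv_of_equiv hτ (hρ'.equiv_of_equiv hρ (Rel.equiv_refl _))
  have hμ'' : μ.equiv μ' := hμ.equiv_of_equiv hμ' (hds.equiv_of_equiv hds' (Rel.equiv_refl _))
  exact hτ''.trans (h.trans hμ'')

theorem statement2_general [HasFiniteLimits 𝒞]
    (N : MorphismProperty 𝒞) (hN : IsIdeal N) (hker : HasNKernels N)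
    {A B E D : 𝒞} (f : A ⟶ B) (s : B ⟶ A) (g : E ⟶ D) (t : D ⟶ E)
    (c : E ⟶ A) (d : D ⟶ B) (hsq : IsSquare1 f s g t c d)
    {M : 𝒞} (p : E ⟶ M) (m : M ⟶ pullback d f)
    (hp : IsRegEpi p) (hm : Mono m)
    (hmp : p ≫ m = pullback.lift g c hsq.comm1.symm)
    {Na : 𝒞} (na : Na ⟶ M) (hna : IsNKernel N (m ≫ pullback.fst d f) na)
    {Nx : 𝒞} (nx : Nx ⟶ pullback d f) (hnx : IsNKernel N (pullback.fst d f) nx)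
    (u : Na ⟶ Nx) (hu : u ≫ nx = na ≫ m) :
    IsStarRegularPushout N f g c d ↔ IsIso u := by
  obtain ⟨K, n, hn⟩ := hker (𝟙 D)
  have := hna.mono hN
  let ρ := (Rel.ofPullback d f).restrict m hm
  have hg : p ≫ m ≫ pullback.fst d f = g := by rw [reassoc_of% hmp, pullback.lift_fst]
  have hc : p ≫ m ≫ pullback.snd d f = c := by rw [reassoc_of% hmp, pullback.lift_snd]
  rw [isStarRegularPushout_iff (isRelComp_homRel_op_homRel ρ hp hg hc)
    (isLargestStarSub_restrict hN ρ hna) (isLargestStarSub_restrict hN (homRel d) hn)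
    (isRelComp_op_homRel_restrict hN f d hn hnx),
    ← Rel.restrict_equiv_restrict_iff (Rel.ofPullback d f) (mono_comp na m) (hnx.mono hN) u hu]
  have hna_m := Rel.restrict_restrict_equiv (Rel.ofPullback d f) m hm na (hna.mono hN)
  exact ⟨hna_m.symm.trans, hna_m.trans⟩

/-- In a regular multi-pointed category with kernels, given a square
of type (1) and the (regular epi, mono) factorisation `⟨g,c⟩ = m·p`, the square is a
star-regular pushout iff the induced morphism between the `N`-kernels of `a = x·m`
and of `x` is an isomorphism. -/
theorem statement2 [HasFiniteLimits 𝒞]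
    (hcoeq : KernelPairsHaveCoequalisers 𝒞) (hstab : RegEpisStable 𝒞)
    (N : MorphismProperty 𝒞) (hN : IsIdeal N) (hker : HasNKernels N)
    {A B E D : 𝒞} (f : A ⟶ B) (s : B ⟶ A) (g : E ⟶ D) (t : D ⟶ E)
    (c : E ⟶ A) (d : D ⟶ B) (hsq : IsSquare1 f s g t c d)
    {M : 𝒞} (p : E ⟶ M) (m : M ⟶ pullback d f)
    (hp : IsRegEpi p) (hm : Mono m)
    (hmp : p ≫ m = pullback.lift g c hsq.comm1.symm)
    {Na : 𝒞} (na : Na ⟶ M) (hna : IsNKernel N (m ≫ pullback.fst d f) na)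
    {Nx : 𝒞} (nx : Nx ⟶ pullback d f) (hnx : IsNKernel N (pullback.fst d f) nx)
    (u : Na ⟶ Nx) (hu : u ≫ nx = na ≫ m) :
    IsStarRegularPushout N f g c d ↔ IsIso u :=
  statement2_general N hN hker f s g t c d hsq p m hp hm hmp na hna nx hnx u hu

end Paper
end

section
/- Let C be a regular multi-pointed category with kernels. If Eq(f) Eq(g)* ≤ Eq(g) Eq(f)* for every pair of regular epimorphisms f and g of C with the same domain, then Eq(f) Eq(g)* = Eq(g) Eq(f)* for every such pair, i.e. C is 2-star-permutable. -/
open CategoryTheory CategoryTheory.Limits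

universe v u

namespace Paper

variable {𝒞 : Type u} [Category.{v} 𝒞]

variable {X Y Z : 𝒞}

theorem statement3_general [HasFiniteLimits 𝒞]
    (N : MorphismProperty 𝒞)
    (hle : ∀ {X Y Z : 𝒞} (f : X ⟶ Y) (g : X ⟶ Z), IsRegEpi f → IsRegEpi g →
      ∀ (sf sg : Rel 𝒞 X X), IsLargestStarSub N (kerPairRel f) sf →
        IsLargestStarSub N (kerPairRel g) sg →
      ∀ (τ₁ τ₂ : Rel 𝒞 X X), IsRelComp (kerPairRel f) sg τ₁ →
        IsRelComp (kerPairRel g) sf τ₂ → τ₁.le τ₂) :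
    TwoStarPermutable 𝒞 N := by
  intro X Y Z f g hf hg sf sg hsf hsg τ₁ τ₂ h₁ h₂
  exact ⟨hle f g hf hg sf sg hsf hsg τ₁ τ₂ h₁ h₂,
         hle g f hg hf sg sf hsg hsf τ₂ τ₁ h₂ h₁⟩

/-- In a regular multi-pointed category with kernels, if
`Eq(f) Eq(g)* ≤ Eq(g) Eq(f)*` for all regular epimorphisms `f`, `g` with the same
domain, then equality holds for all such pairs, i.e. `𝒞` is 2-star-permutable. -/
theorem statement3 [HasFiniteLimits 𝒞]
    (hcoeq : KernelPairsHaveCoequalisers 𝒞) (hstab : RegEpisStable 𝒞)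
    (N : MorphismProperty 𝒞) (hN : IsIdeal N) (hker : HasNKernels N)
    (hle : ∀ {X Y Z : 𝒞} (f : X ⟶ Y) (g : X ⟶ Z), IsRegEpi f → IsRegEpi g →
      ∀ (sf sg : Rel 𝒞 X X), IsLargestStarSub N (kerPairRel f) sf →
        IsLargestStarSub N (kerPairRel g) sg →
      ∀ (τ₁ τ₂ : Rel 𝒞 X X), IsRelComp (kerPairRel f) sg τ₁ →
        IsRelComp (kerPairRel g) sf τ₂ → τ₁.le τ₂) :
    TwoStarPermutable 𝒞 N :=
  statement3_general N hle

end Paper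
end
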